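/- Let alpha, beta be real numbers with 0 <= alpha <= 1 and 0 <= beta <= 1, let M be the 2x2 matrix with rows (1-alpha, alpha) and (beta, 1-beta), let t >= 1 be a natural number, and let delta satisfy 0 < delta < 1. Among all probability distributions p on triples (X0, Xt, Q), with X0, Xt in {A, B} and Q in {a, b, ab}, satisfying (i) Pr(X0=A, Xt=x) = delta * (M^t)_{A,x} and Pr(X0=B, Xt=x) = (1-delta) * (M^t)_{B,x}, (ii) Q independent of X0, and (iii) Pr(Q=a and Xt=B) = 0 and Pr(Q=b and Xt=A) = 0, the value |1 - alpha - beta|^t is the least attainable value of Pr(Q=ab). Equivalently, the maximum achievable download rate at time t equals 1/(1 + |1 - alpha - beta|^t). -/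

import Mathlib

/-!
Write `N = Mᵗ`. Decodability lets `Q = a` occur only together with `Xₜ = A`, so independence of `Q`
and `X₀` gives `Pr(Q = a) Pr(X₀ = x) = Pr(X₀ = x, Q = a) ≤ Pr(X₀ = x) N x A` for both initial
states `x`; as `0 < δ < 1`, `Pr(Q = a) ≤ min (N A A) (N B A)`, and likewise
`Pr(Q = b) ≤ min (N A B) (N B B)`. Since the rows of `N` sum to one, this leaves
`Pr(Q = ab) ≥ |N A A - N B A|`, and `N A A - N B A = (1 - α - β)ᵗ` because `(1, -1)` is a left
eigenvector of `M` for the eigenvalue `1 - α - β`. The bound is attained by asking, whatever `X₀`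
is, for `a` with probability `min (N A A) (N B A)` (only when `Xₜ = A`), for `b` with probability
`min (N A B) (N B B)` (only when `Xₜ = B`), and for `ab` otherwise.
-/

open Finset

/- Encoding: `X₀, Xₜ : Fin 2` with `0 = A`, `1 = B`; `Q : Fin 3` with `0 = a`, `1 = b`,
`2 = ab`. A joint distribution is `p x0 xt q = Pr(X₀ = x0, Xₜ = xt, Q = q)`. -/

/-- `Admissible α β t δ p` says that `p` is a probability distribution on triples
`(X₀, Xₜ, Q)` such that (i) the marginal of `(X₀, Xₜ)` is that of the two-state Markov
chain with transition matrix `M = !![1-α, α; β, 1-β]` after `t` steps and initial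
probability `δ = Pr(X₀ = A)`, (ii) `Q` is independent of `X₀`, and (iii) the decodability
conditions `Pr(Q = a ∧ Xₜ = B) = 0` and `Pr(Q = b ∧ Xₜ = A) = 0` hold. -/
def Admissible (α β : ℝ) (t : ℕ) (δ : ℝ) (p : Fin 2 → Fin 2 → Fin 3 → ℝ) : Prop :=
  (∀ x0 xt q, 0 ≤ p x0 xt q) ∧
  (∑ x0, ∑ xt, ∑ q, p x0 xt q = 1) ∧
  (∀ x : Fin 2, (∑ q, p 0 x q)
    = δ * ((!![1 - α, α; β, 1 - β] : Matrix (Fin 2) (Fin 2) ℝ) ^ t) 0 x) ∧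
  (∀ x : Fin 2, (∑ q, p 1 x q)
    = (1 - δ) * ((!![1 - α, α; β, 1 - β] : Matrix (Fin 2) (Fin 2) ℝ) ^ t) 1 x) ∧
  (∀ (q : Fin 3) (x0 : Fin 2),
    (∑ xt, p x0 xt q)
      = (∑ x0', ∑ xt, p x0' xt q) * (∑ xt, ∑ q', p x0 xt q')) ∧
  (∑ x0, p x0 1 0 = 0) ∧
  (∑ x0, p x0 0 1 = 0)

open Matrix

section Eigenvector

variable {n R : Type*} [Fintype n] [DecidableEq n] [CommSemiring R]

theorem Matrix.pow_mulVec_of_mulVec_eq_smul {M : Matrix n n R} {v : n → R} {μ : R}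
    (h : M *ᵥ v = μ • v) (t : ℕ) : M ^ t *ᵥ v = μ ^ t • v := by
  induction t with
  | zero => simp
  | succ t ih => rw [pow_succ, ← mulVec_mulVec, h, mulVec_smul, ih, smul_smul, pow_succ']

theorem Matrix.vecMul_pow_of_vecMul_eq_smul {M : Matrix n n R} {v : n → R} {μ : R}
    (h : v ᵥ* M = μ • v) (t : ℕ) : v ᵥ* M ^ t = μ ^ t • v := by
  induction t with
  | zero => simp
  | succ t ih => rw [pow_succ', ← vecMul_vecMul, h, smul_vecMul, ih, smul_smul, pow_succ']

end Eigenvector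

section TwoStateChain

variable (α β : ℝ)

theorem twoState_mem_rowStochastic (hα0 : 0 ≤ α) (hα1 : α ≤ 1) (hβ0 : 0 ≤ β) (hβ1 : β ≤ 1) :
    !![1 - α, α; β, 1 - β] ∈ rowStochastic ℝ (Fin 2) := by
  refine mem_rowStochastic_iff_sum.2 ⟨?_, fun i => ?_⟩
  · simp only [Fin.forall_fin_two, of_apply, cons_val_zero, cons_val_one, cons_val_fin_one]
    exact ⟨⟨sub_nonneg.2 hα1, hα0⟩, hβ0, sub_nonneg.2 hβ1⟩
  · fin_cases i <;> simp

theorem twoState_pow_sum_row (t : ℕ) (i : Fin 2) :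
    ∑ j, ((!![1 - α, α; β, 1 - β] : Matrix (Fin 2) (Fin 2) ℝ) ^ t) i j = 1 := by
  have h : !![1 - α, α; β, 1 - β] *ᵥ (1 : Fin 2 → ℝ) = (1 : ℝ) • 1 := by
    ext i
    fin_cases i <;> simp [mulVec, dotProduct]
  simpa [mulVec, dotProduct] using congrFun (pow_mulVec_of_mulVec_eq_smul h t) i

theorem twoState_pow_sub (t : ℕ) :
    ((!![1 - α, α; β, 1 - β] : Matrix (Fin 2) (Fin 2) ℝ) ^ t) 0 0
      - ((!![1 - α, α; β, 1 - β] : Matrix (Fin 2) (Fin 2) ℝ) ^ t) 1 0 = (1 - α - β) ^ t := by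
  have h : ![1, -1] ᵥ* !![1 - α, α; β, 1 - β] = (1 - α - β) • ![1, -1] := by
    ext j
    fin_cases j <;>
      simp only [vecMul, dotProduct, Fin.sum_univ_two, of_apply, cons_val', cons_val_zero,
        cons_val_one, cons_val_fin_one, Fin.zero_eta, Fin.mk_one, Pi.smul_apply, smul_eq_mul] <;>
      ring
  simpa [vecMul, dotProduct, sub_eq_add_neg] using
    congrFun (vecMul_pow_of_vecMul_eq_smul h t) 0

end TwoStateChain

theorem sub_min_sub_min_sub_eq_abs {G : Type*} [AddCommGroup G] [LinearOrder G]
    [IsOrderedAddMonoid G] (x a c : G) : x - min a c - min (x - a) (x - c) = |a - c| := by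
  rw [min_sub_sub_left, ← max_sub_min_eq_abs']
  abel

theorem one_sub_min_sub_min_eq_abs {N : Matrix (Fin 2) (Fin 2) ℝ} (hN : ∀ i, ∑ j, N i j = 1) :
    1 - min (N 0 0) (N 1 0) - min (N 0 1) (N 1 1) = |N 0 0 - N 1 0| := by
  have h0 : N 0 1 = 1 - N 0 0 := by linarith [Fin.sum_univ_two (N 0) ▸ hN 0]
  have h1 : N 1 1 = 1 - N 1 0 := by linarith [Fin.sum_univ_two (N 1) ▸ hN 1]
  rw [h0, h1, sub_min_sub_min_sub_eq_abs]

def initialDist (δ : ℝ) : Fin 2 → ℝ := ![δ, 1 - δ]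

def probQ (p : Fin 2 → Fin 2 → Fin 3 → ℝ) (q : Fin 3) : ℝ := ∑ x0, ∑ xt, p x0 xt q

namespace Admissible

variable {α β : ℝ} {t : ℕ} {δ : ℝ} {p : Fin 2 → Fin 2 → Fin 3 → ℝ}

theorem sum_q_eq (hp : Admissible α β t δ p) (x0 x : Fin 2) :
    ∑ q, p x0 x q
      = initialDist δ x0 * ((!![1 - α, α; β, 1 - β] : Matrix (Fin 2) (Fin 2) ℝ) ^ t) x0 x := by
  fin_cases x0
  exacts [hp.2.2.1 x, hp.2.2.2.1 x]

theorem sum_xt_sum_q_eq (hp : Admissible α β t δ p) (x0 : Fin 2) :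
    ∑ xt, ∑ q, p x0 xt q = initialDist δ x0 := by
  simp_rw [hp.sum_q_eq, ← mul_sum, twoState_pow_sum_row, mul_one]

theorem sum_xt_eq (hp : Admissible α β t δ p) (q : Fin 3) (x0 : Fin 2) :
    ∑ xt, p x0 xt q = probQ p q * initialDist δ x0 := by
  rw [hp.2.2.2.2.1 q x0, hp.sum_xt_sum_q_eq, probQ]

theorem sum_probQ (hp : Admissible α β t δ p) : ∑ q, probQ p q = 1 := by
  rw [← hp.2.1]
  simp only [probQ]
  rw [sum_comm]
  exact sum_congr rfl fun _ _ => sum_comm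

theorem eq_zero_of_Q_a_of_Xt_B (hp : Admissible α β t δ p) (x0 : Fin 2) : p x0 1 0 = 0 :=
  (sum_eq_zero_iff_of_nonneg fun _ _ => hp.1 _ _ _).1 hp.2.2.2.2.2.1 x0 (mem_univ _)

theorem eq_zero_of_Q_b_of_Xt_A (hp : Admissible α β t δ p) (x0 : Fin 2) : p x0 0 1 = 0 :=
  (sum_eq_zero_iff_of_nonneg fun _ _ => hp.1 _ _ _).1 hp.2.2.2.2.2.2 x0 (mem_univ _)

theorem probQ_le (hp : Admissible α β t δ p) {x0 xt : Fin 2} {q : Fin 3}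
    (hx0 : 0 < initialDist δ x0) (hq : ∀ x, x ≠ xt → p x0 x q = 0) :
    probQ p q ≤ ((!![1 - α, α; β, 1 - β] : Matrix (Fin 2) (Fin 2) ℝ) ^ t) x0 xt := by
  refine le_of_mul_le_mul_right ?_ hx0
  calc probQ p q * initialDist δ x0 = ∑ x, p x0 x q := (hp.sum_xt_eq q x0).symm
    _ = p x0 xt q := sum_eq_single xt (fun x _ hx => hq x hx) (by simp)
    _ ≤ ∑ q', p x0 xt q' := single_le_sum (fun q' _ => hp.1 x0 xt q') (mem_univ q)
    _ = _ := by rw [hp.sum_q_eq, mul_comm]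

theorem abs_pow_le_probQ (hp : Admissible α β t δ p) (hδ0 : 0 < δ) (hδ1 : δ < 1) :
    |1 - α - β| ^ t ≤ probQ p 2 := by
  have h0 : 0 < initialDist δ 0 := hδ0
  have h1 : 0 < initialDist δ 1 := sub_pos.2 hδ1
  have ha (x0 : Fin 2) (hx0 : 0 < initialDist δ x0) := hp.probQ_le (xt := 0) (q := 0) hx0
    fun x hx => by rw [show x = 1 by omega, hp.eq_zero_of_Q_a_of_Xt_B]
  have hb (x0 : Fin 2) (hx0 : 0 < initialDist δ x0) := hp.probQ_le (xt := 1) (q := 1) hx0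
    fun x hx => by rw [show x = 0 by omega, hp.eq_zero_of_Q_b_of_Xt_A]
  have hsum := hp.sum_probQ
  rw [Fin.sum_univ_three] at hsum
  rw [← abs_pow, ← twoState_pow_sub, ← one_sub_min_sub_min_eq_abs (twoState_pow_sum_row α β t)]
  linarith [le_min (ha 0 h0) (ha 1 h1), le_min (hb 0 h0) (hb 1 h1)]

end Admissible

def optimalCoupling (δ : ℝ) (N : Matrix (Fin 2) (Fin 2) ℝ) : Fin 2 → Fin 2 → Fin 3 → ℝ :=
  fun x0 xt q => initialDist δ x0 *
    ![![min (N 0 0) (N 1 0), 0, N x0 0 - min (N 0 0) (N 1 0)],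
      ![0, min (N 0 1) (N 1 1), N x0 1 - min (N 0 1) (N 1 1)]] xt q

theorem probQ_optimalCoupling_two {N : Matrix (Fin 2) (Fin 2) ℝ} (hN : ∀ i, ∑ j, N i j = 1)
    (δ : ℝ) : probQ (optimalCoupling δ N) 2 = |N 0 0 - N 1 0| := by
  rw [← one_sub_min_sub_min_eq_abs hN]
  simp only [Fin.sum_univ_two] at hN
  simp only [probQ, optimalCoupling, initialDist, Fin.sum_univ_two, cons_val_zero, cons_val_one,
    cons_val_fin_one, Matrix.cons_val]
  linear_combination δ * hN 0 + (1 - δ) * hN 1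

theorem admissible_optimalCoupling {α β : ℝ} (hα0 : 0 ≤ α) (hα1 : α ≤ 1) (hβ0 : 0 ≤ β)
    (hβ1 : β ≤ 1) (t : ℕ) {δ : ℝ} (hδ0 : 0 ≤ δ) (hδ1 : δ ≤ 1) :
    Admissible α β t δ
      (optimalCoupling δ ((!![1 - α, α; β, 1 - β] : Matrix (Fin 2) (Fin 2) ℝ) ^ t)) := by
  obtain ⟨hpos, hrow⟩ :=
    mem_rowStochastic_iff_sum.1 (pow_mem (twoState_mem_rowStochastic α β hα0 hα1 hβ0 hβ1) t)
  set N := ((!![1 - α, α; β, 1 - β] : Matrix (Fin 2) (Fin 2) ℝ) ^ t)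
  simp only [Fin.sum_univ_two] at hrow
  have hw : ∀ x0, 0 ≤ initialDist δ x0 := Fin.forall_fin_two.2 ⟨hδ0, sub_nonneg.2 hδ1⟩
  have hmin (x0 j : Fin 2) : min (N 0 j) (N 1 j) ≤ N x0 j := by
    fin_cases x0
    exacts [min_le_left _ _, min_le_right _ _]
  refine ⟨fun x0 xt q => ?_, ?_, fun x => ?_, fun x => ?_, fun q x0 => ?_, ?_, ?_⟩
  · refine mul_nonneg (hw x0) ?_
    fin_cases xt <;> fin_cases q <;> simp [hpos, hmin]
  · simp only [optimalCoupling, initialDist, Fin.sum_univ_two, Fin.sum_univ_three, cons_val_zero,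
      cons_val_one, cons_val_fin_one, Matrix.cons_val]
    linear_combination δ * hrow 0 + (1 - δ) * hrow 1
  · fin_cases x <;>
      simp only [optimalCoupling, initialDist, Fin.sum_univ_three, cons_val_zero, cons_val_one,
        cons_val_fin_one, Fin.zero_eta, Fin.mk_one, Matrix.cons_val] <;> ring
  · fin_cases x <;>
      simp only [optimalCoupling, initialDist, Fin.sum_univ_three, cons_val_zero, cons_val_one,
        cons_val_fin_one, Fin.zero_eta, Fin.mk_one, Matrix.cons_val] <;> ring
  · have h0 : N 0 1 = 1 - N 0 0 := by linarith [hrow 0]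
    have h1 : N 1 1 = 1 - N 1 0 := by linarith [hrow 1]
    fin_cases q <;> fin_cases x0 <;>
      simp only [optimalCoupling, initialDist, Fin.sum_univ_two, Fin.sum_univ_three, cons_val_zero,
        cons_val_one, cons_val_fin_one, Fin.zero_eta, Fin.mk_one, Fin.reduceFinMk, h0, h1,
        Matrix.cons_val] <;> ring
  · simp [optimalCoupling]
  · simp [optimalCoupling]

theorem stmt6_general (α β : ℝ) (hα0 : 0 ≤ α) (hα1 : α ≤ 1) (hβ0 : 0 ≤ β) (hβ1 : β ≤ 1)
    (t : ℕ) (δ : ℝ) (hδ0 : 0 < δ) (hδ1 : δ < 1) :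
    -- |1 - α - β|^t is the least attainable value of Pr(Q = ab)
    IsLeast {r : ℝ | ∃ p, Admissible α β t δ p ∧ r = ∑ x0, ∑ xt, p x0 xt 2}
      (|1 - α - β| ^ t) ∧
    -- equivalently, 1/(1 + |1 - α - β|^t) is the maximum achievable download rate
    IsGreatest {R : ℝ | ∃ p, Admissible α β t δ p ∧ R = 1 / (1 + ∑ x0, ∑ xt, p x0 xt 2)}
      (1 / (1 + |1 - α - β| ^ t)) := by
  have hopt := admissible_optimalCoupling hα0 hα1 hβ0 hβ1 t hδ0.le hδ1.le
  have hval := probQ_optimalCoupling_two (twoState_pow_sum_row α β t) δ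
  rw [twoState_pow_sub, abs_pow] at hval
  refine ⟨⟨⟨_, hopt, hval.symm⟩, ?_⟩, ⟨_, hopt, by rw [← hval]; rfl⟩, ?_⟩
  · rintro _ ⟨p, hp, rfl⟩
    exact hp.abs_pow_le_probQ hδ0 hδ1
  · rintro _ ⟨p, hp, rfl⟩
    gcongr
    exact hp.abs_pow_le_probQ hδ0 hδ1

theorem stmt6 (α β : ℝ) (hα0 : 0 ≤ α) (hα1 : α ≤ 1) (hβ0 : 0 ≤ β) (hβ1 : β ≤ 1)
    (t : ℕ) (ht : 1 ≤ t) (δ : ℝ) (hδ0 : 0 < δ) (hδ1 : δ < 1) :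
    -- |1 - α - β|^t is the least attainable value of Pr(Q = ab)
    IsLeast {r : ℝ | ∃ p, Admissible α β t δ p ∧ r = ∑ x0, ∑ xt, p x0 xt 2}
      (|1 - α - β| ^ t) ∧
    -- equivalently, 1/(1 + |1 - α - β|^t) is the maximum achievable download rate
    IsGreatest {R : ℝ | ∃ p, Admissible α β t δ p ∧ R = 1 / (1 + ∑ x0, ∑ xt, p x0 xt 2)}
      (1 / (1 + |1 - α - β| ^ t)) :=
  stmt6_general α β hα0 hα1 hβ0 hβ1 t δ hδ0 hδ1
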